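/- arXiv:1411.3244 — 6 statements merged into one kernel-verified Lean document; each statement's English description precedes it below -/
import Mathlib

section
/- For every natural number n ≥ 1, the polygamma function of order 2n at 1/2 satisfies ψ^{(2n)}(1/2) = -(2^{2n+1} - 1) · (2n)! · ζ(2n+1); formally, iteratedDeriv (2n+1) (fun x : ℝ => Real.log (Real.Gamma x)) (1/2) = -((2^(2*n+1) : ℝ) - 1) * (2*n)! * ∑' k : ℕ, (1 : ℝ) / (k+1)^(2*n+1). -/
/-!
Taking logarithms in Euler's limit formula for `Γ` and using `H_N - log N → γ` gives the
Weierstrass series `log Γ(x) = -γx - log x + ∑ₖ (x/(k+1) - log (1 + x/(k+1)))` on `x > 0`.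
Its termwise derivatives converge locally uniformly, so `(log Γ)'' (x) = ∑ₖ 1/(k+x)²` and
`(log Γ)⁽ʲ⁺²⁾ (x) = (-1)ʲ (j+1)! ∑ₖ 1/(k+x)ʲ⁺²`. At `x = 1/2`, splitting `ζ(s)` into even and
odd terms gives `∑ₖ 1/(k+1/2)ˢ = (2ˢ - 1) ζ(s)`.
-/

open Real Filter Topology Set
open scoped Nat

local notation "γ" => Real.eulerMascheroniConstant

/-- The Hurwitz zeta function `ζ(m, x)` at an integer `m`, as a real series
(junk value `0` when `m ≤ 1`, where the series diverges). -/
noncomputable def hurwitzSum (m : ℕ) (x : ℝ) : ℝ := ∑' k : ℕ, 1 / ((k : ℝ) + x) ^ m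

lemma summable_one_div_natCast_add_pow (x : ℝ) {m : ℕ} (hm : 2 ≤ m) :
    Summable fun k : ℕ => 1 / ((k : ℝ) + x) ^ m := by
  have h := (Real.summable_one_div_nat_add_rpow x m).mpr (by exact_mod_cast hm)
  refine summable_abs_iff.mp (h.congr fun k => ?_)
  rw [Real.rpow_natCast, abs_div, abs_one, abs_pow]

lemma hurwitzSum_one_half {m : ℕ} (hm : 2 ≤ m) :
    hurwitzSum m (1 / 2) = (2 ^ m - 1) * ∑' k : ℕ, 1 / ((k : ℝ) + 1) ^ m := by
  set Z := ∑' k : ℕ, 1 / ((k : ℝ) + 1) ^ m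
  have hZ := (summable_one_div_natCast_add_pow 1 hm).hasSum
  have heven : HasSum (fun k : ℕ => 1 / ((↑(2 * k) : ℝ) + 1) ^ m)
      ((2 ^ m)⁻¹ * hurwitzSum m (1 / 2)) := by
    refine ((summable_one_div_natCast_add_pow (1 / 2) hm).hasSum.mul_left _).congr_fun fun k => ?_
    push_cast
    rw [show 2 * (k : ℝ) + 1 = 2 * (k + 1 / 2) by ring, mul_pow]
    field_simp
  have hodd : HasSum (fun k : ℕ => 1 / ((↑(2 * k + 1) : ℝ) + 1) ^ m) ((2 ^ m)⁻¹ * Z) := by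
    refine (hZ.mul_left _).congr_fun fun k => ?_
    push_cast
    rw [show 2 * (k : ℝ) + 1 + 1 = 2 * (k + 1) by ring, mul_pow]
    field_simp
  have hsplit := hZ.unique (heven.even_add_odd hodd)
  have h2m : (2 : ℝ) ^ m ≠ 0 := by positivity
  field_simp at hsplit
  linarith

lemma sub_log_one_add_nonneg {t : ℝ} (ht : 0 ≤ t) : 0 ≤ t - log (1 + t) := by
  linarith [log_le_sub_one_of_pos (by linarith : 0 < 1 + t)]

lemma sub_log_one_add_le_sq {t : ℝ} (ht : 0 ≤ t) : t - log (1 + t) ≤ t ^ 2 := by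
  have h := one_sub_inv_le_log_of_pos (by linarith : 0 < 1 + t)
  have : 1 - (1 + t)⁻¹ = t - t ^ 2 / (1 + t) := by field_simp; ring
  have : t ^ 2 / (1 + t) ≤ t ^ 2 := div_le_self (sq_nonneg t) (by linarith)
  linarith

lemma summable_sub_log_one_add_div {x : ℝ} (hx : 0 ≤ x) :
    Summable fun k : ℕ => x / ((k : ℝ) + 1) - log (1 + x / ((k : ℝ) + 1)) := by
  refine ((summable_one_div_natCast_add_pow 1 le_rfl).mul_left (x ^ 2)).of_nonneg_of_le
    (fun k => sub_log_one_add_nonneg (by positivity)) fun k => ?_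
  calc _ ≤ (x / ((k : ℝ) + 1)) ^ 2 := sub_log_one_add_le_sq (by positivity)
    _ = _ := by rw [div_pow, mul_one_div]

lemma sum_range_sub_log_one_add_div {x : ℝ} (hx : 0 < x) (N : ℕ) :
    -γ * x - log x + ∑ k ∈ Finset.range N, (x / ((k : ℝ) + 1) - log (1 + x / ((k : ℝ) + 1))) =
      BohrMollerup.logGammaSeq x N + x * (harmonic N - log N - γ) := by
  have hterm (k : ℕ) : x / ((k : ℝ) + 1) - log (1 + x / ((k : ℝ) + 1)) =
      x * ((↑(k + 1) : ℚ)⁻¹ : ℚ) - (log (x + ↑(k + 1)) - log ↑(k + 1)) := by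
    have hk : (0 : ℝ) < k + 1 := by positivity
    rw [← log_div (by positivity) (by positivity)]
    push_cast
    rw [show (x + (k + 1)) / ((k : ℝ) + 1) = 1 + x / (k + 1) by field_simp; ring]
    ring
  have hfac : log (N ! : ℝ) = ∑ k ∈ Finset.range N, log ↑(k + 1) := by
    rw [← log_prod (fun k _ => by positivity), ← Finset.prod_range_add_one_eq_factorial]
    push_cast
    rfl
  simp only [hterm, Finset.sum_sub_distrib, ← Finset.mul_sum, BohrMollerup.logGammaSeq, hfac,
    Finset.sum_range_succ' (fun m => log (x + m)), harmonic]
  push_cast [add_zero]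
  ring

theorem log_Gamma_eq_tsum {x : ℝ} (hx : 0 < x) :
    log (Gamma x) =
      -γ * x - log x + ∑' k : ℕ, (x / ((k : ℝ) + 1) - log (1 + x / ((k : ℝ) + 1))) := by
  have hpartial :=
    (summable_sub_log_one_add_div hx.le).hasSum.tendsto_sum_nat.const_add (-γ * x - log x)
  have hEuler : Tendsto (fun N : ℕ => x * (harmonic N - log N - γ)) atTop (𝓝 0) := by
    simpa using (tendsto_harmonic_sub_log.sub_const γ).const_mul x
  refine tendsto_nhds_unique ?_ hpartial
  simpa using ((BohrMollerup.tendsto_log_gamma hx).add hEuler).congr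
    fun N => (sum_range_sub_log_one_add_div hx N).symm

lemma hasDerivAt_one_div_add_pow (c : ℝ) (m : ℕ) {y : ℝ} (hy : c + y ≠ 0) :
    HasDerivAt (fun z => 1 / (c + z) ^ m) (-m / (c + y) ^ (m + 1)) y := by
  cases m with
  | zero => simpa using hasDerivAt_const y (1 : ℝ)
  | succ m =>
    have h := (((hasDerivAt_id' y).const_add c).pow (m + 1)).inv (pow_ne_zero _ hy)
    simp only [one_div]
    refine h.congr_deriv ?_
    rw [Nat.add_sub_cancel, Pi.pow_apply]
    field_simp
    ring

lemma hasDerivAt_sub_log_one_add_div {c : ℝ} (hc : c ≠ 0) {y : ℝ} (hy : c + y ≠ 0) :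
    HasDerivAt (fun z => z / c - log (1 + z / c)) (1 / c - 1 / (c + y)) y := by
  have hy' : 1 + y / c ≠ 0 := by
    rw [one_add_div hc]; exact div_ne_zero hy hc
  have hlog := (((hasDerivAt_id' y).div_const c).const_add 1).log hy'
  refine (((hasDerivAt_id' y).div_const c).sub hlog).congr_deriv ?_
  field_simp

lemma one_div_sub_one_div_add_mem_Icc {c y : ℝ} (hc : 0 < c) (hy : 0 ≤ y) :
    1 / c - 1 / (c + y) ∈ Icc 0 (y / c ^ 2) := by
  have h : 1 / c - 1 / (c + y) = y / (c * (c + y)) := by field_simp; ring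
  rw [h]
  exact ⟨by positivity, div_le_div_of_nonneg_left hy (by positivity) (by nlinarith)⟩

noncomputable def digammaSeries (x : ℝ) : ℝ :=
  -γ - x⁻¹ + ∑' k : ℕ, (1 / ((k : ℝ) + 1) - 1 / ((k : ℝ) + 1 + x))

theorem hasDerivAt_log_Gamma {x : ℝ} (hx : 0 < x) :
    HasDerivAt (fun y => log (Gamma y)) (digammaSeries x) x := by
  have hk (k : ℕ) : (0 : ℝ) < k + 1 := by positivity
  have hseries : HasDerivAt (fun y => ∑' k : ℕ, (y / ((k : ℝ) + 1) - log (1 + y / ((k : ℝ) + 1))))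
      (∑' k : ℕ, (1 / ((k : ℝ) + 1) - 1 / ((k : ℝ) + 1 + x))) x := by
    refine hasDerivAt_tsum_of_isPreconnected (t := Ioo 0 (x + 1)) (y₀ := x)
      ((summable_one_div_natCast_add_pow 1 le_rfl).mul_left (x + 1)) isOpen_Ioo
      isPreconnected_Ioo (fun k y hy => hasDerivAt_sub_log_one_add_div (hk k).ne' ?_)
      (fun k y hy => ?_) ⟨hx, by linarith⟩ (summable_sub_log_one_add_div hx.le) ⟨hx, by linarith⟩
    · linarith [hk k, hy.1]
    · obtain ⟨h0, h1⟩ := one_div_sub_one_div_add_mem_Icc (hk k) hy.1.le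
      rw [Real.norm_eq_abs, abs_of_nonneg h0, mul_one_div]
      exact h1.trans (by gcongr; exact hy.2.le)
  have hlin := ((hasDerivAt_id' x).const_mul (-γ)).sub (hasDerivAt_log hx.ne')
  refine ((hlin.add hseries).congr_deriv ?_).congr_of_eventuallyEq ?_
  · rw [digammaSeries]; ring
  · filter_upwards [Ioi_mem_nhds hx] with y hy
    exact log_Gamma_eq_tsum hy

theorem hasDerivAt_digammaSeries {x : ℝ} (hx : 0 < x) :
    HasDerivAt digammaSeries (hurwitzSum 2 x) x := by
  have hk (k : ℕ) : (0 : ℝ) < k + 1 := by positivity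
  have hseries : HasDerivAt (fun y => ∑' k : ℕ, (1 / ((k : ℝ) + 1) - 1 / ((k : ℝ) + 1 + y)))
      (∑' k : ℕ, 1 / ((k : ℝ) + 1 + x) ^ 2) x := by
    refine hasDerivAt_tsum_of_isPreconnected (t := Ioi 0) (y₀ := x)
      (g := fun (k : ℕ) (y : ℝ) => 1 / ((k : ℝ) + 1) - 1 / ((k : ℝ) + 1 + y))
      (g' := fun (k : ℕ) (y : ℝ) => 1 / ((k : ℝ) + 1 + y) ^ 2)
      (summable_one_div_natCast_add_pow 1 le_rfl) isOpen_Ioi isPreconnected_Ioi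
      (fun k y hy => ?_) (fun k y hy => ?_) hx ?_ hx
    · have h := (hasDerivAt_one_div_add_pow ((k : ℝ) + 1) 1 (y := y)
        (by linarith [hk k, hy.out])).const_sub (1 / ((k : ℝ) + 1))
      simp only [pow_one, Nat.cast_one] at h
      exact h.congr_deriv (by ring)
    · rw [Real.norm_eq_abs, abs_of_nonneg (by positivity)]
      exact one_div_le_one_div_of_le (by positivity)
        (pow_le_pow_left₀ (hk k).le (by linarith [hy.out]) 2)
    · refine ((summable_one_div_natCast_add_pow 1 le_rfl).mul_left x).of_nonneg_of_le
        (fun k => (one_div_sub_one_div_add_mem_Icc (hk k) hx.le).1) fun k => ?_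
      rw [mul_one_div]
      exact (one_div_sub_one_div_add_mem_Icc (hk k) hx.le).2
  have hinv : HasDerivAt (fun y : ℝ => y⁻¹) (-(x ^ 2)⁻¹) x := hasDerivAt_inv hx.ne'
  refine ((hinv.const_sub (-γ)).add hseries).congr_deriv ?_
  rw [hurwitzSum, (summable_one_div_natCast_add_pow x le_rfl).tsum_eq_zero_add]
  push_cast
  ring

theorem hasDerivAt_hurwitzSum {m : ℕ} (hm : 2 ≤ m) {x : ℝ} (hx : 0 < x) :
    HasDerivAt (hurwitzSum m) (-m * hurwitzSum (m + 1) x) x := by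
  have hx2 : x ∈ Ioi (x / 2) := by simp [hx]
  have hseries : HasDerivAt (hurwitzSum m) (∑' k : ℕ, -m / ((k : ℝ) + x) ^ (m + 1)) x := by
    refine hasDerivAt_tsum_of_isPreconnected (t := Ioi (x / 2)) (y₀ := x)
      ((summable_one_div_natCast_add_pow (x / 2) (by omega : 2 ≤ m + 1)).mul_left (m : ℝ))
      isOpen_Ioi isPreconnected_Ioi (fun k y hy => hasDerivAt_one_div_add_pow (k : ℝ) m ?_)
      (fun k y hy => ?_) hx2 (summable_one_div_natCast_add_pow x hm) hx2
    · linarith [hy.out, k.cast_nonneg (α := ℝ)]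
    · have hky : 0 < (k : ℝ) + y := by linarith [hy.out, k.cast_nonneg (α := ℝ)]
      rw [norm_div, norm_neg, Real.norm_natCast, Real.norm_eq_abs, abs_of_pos (by positivity),
        ← mul_one_div]
      gcongr
      exact hy.out.le
  refine hseries.congr_deriv ?_
  rw [hurwitzSum, ← tsum_mul_left]
  congr 1 with k
  ring

theorem iteratedDeriv_hurwitzSum_two (j : ℕ) {x : ℝ} (hx : 0 < x) :
    iteratedDeriv j (hurwitzSum 2) x = (-1) ^ j * (j + 1)! * hurwitzSum (j + 2) x := by
  induction j generalizing x with
  | zero => simp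
  | succ j ih =>
    have hev : iteratedDeriv j (hurwitzSum 2) =ᶠ[𝓝 x]
        fun y => (-1) ^ j * (j + 1)! * hurwitzSum (j + 2) y := by
      filter_upwards [Ioi_mem_nhds hx] with y hy using ih hy
    rw [iteratedDeriv_succ, hev.deriv_eq,
      ((hasDerivAt_hurwitzSum (by omega) hx).const_mul _).deriv]
    push_cast [Nat.factorial_succ]
    ring

theorem iteratedDeriv_log_Gamma (j : ℕ) {x : ℝ} (hx : 0 < x) :
    iteratedDeriv (j + 2) (fun y => log (Gamma y)) x =
      (-1) ^ j * (j + 1)! * hurwitzSum (j + 2) x := by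
  have hψ : EqOn (deriv fun y => log (Gamma y)) digammaSeries (Ioi 0) :=
    fun y hy => (hasDerivAt_log_Gamma hy).deriv
  have hψ' : EqOn (deriv (deriv fun y => log (Gamma y))) (hurwitzSum 2) (Ioi 0) := fun y hy => by
    rw [(hψ.eventuallyEq_of_mem (Ioi_mem_nhds hy)).deriv_eq, (hasDerivAt_digammaSeries hy).deriv]
  rw [iteratedDeriv_succ', iteratedDeriv_succ', hψ'.iteratedDeriv_of_isOpen isOpen_Ioi j hx,
    iteratedDeriv_hurwitzSum_two j hx]

theorem polygamma_half_zeta_odd (n : ℕ) (hn : 1 ≤ n) :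
    iteratedDeriv (2*n+1) (fun x : ℝ => Real.log (Real.Gamma x)) (1/2) =
      -((2^(2*n+1) : ℝ) - 1) * (Nat.factorial (2*n) : ℝ) * ∑' k : ℕ, (1 : ℝ) / (k+1)^(2*n+1) := by
  obtain ⟨j, rfl⟩ : ∃ j, n = j + 1 := ⟨n - 1, by omega⟩
  rw [show 2 * (j + 1) + 1 = 2 * j + 1 + 2 by ring, iteratedDeriv_log_Gamma _ one_half_pos,
    hurwitzSum_one_half (by omega), Odd.neg_one_pow ⟨j, rfl⟩,
    show 2 * j + 1 + 1 = 2 * (j + 1) by ring]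
  ring
end

section
/- For every natural number n ≥ 1 and every real s with 0 < s < 1, the following two identities hold: (i) iteratedDeriv (2n+1) (fun x : ℝ => Real.log (Real.Gamma x)) s = iteratedDeriv (2n+1) (fun x : ℝ => Real.log (Real.Gamma (x/2))) s - iteratedDeriv (2n+1) (fun x : ℝ => Real.log (Real.Gamma ((1-x)/2))) s - iteratedDeriv (2n+1) (fun x : ℝ => Real.log (Real.cos (Real.pi * x / 2))) s; and (ii) iteratedDeriv (2n+1) (fun x : ℝ => Real.log (Real.Gamma (1-x))) s = - iteratedDeriv (2n+1) (fun x : ℝ => Real.log (Real.Gamma (x/2))) s + iteratedDeriv (2n+1) (fun x : ℝ => Real.log (Real.Gamma ((1-x)/2))) s - iteratedDeriv (2n+1) (fun x : ℝ => Real.log (Real.sin (Real.pi * x / 2))) s. -/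
open Real Topology

/-!
Legendre's duplication formula at `u / 2` and the reflection formula at `(1 + u) / 2` express
`log Γ(u)` as `log Γ(u/2) - log Γ((1-u)/2) - log cos(πu/2)` plus an affine function of `u`;
adding the reflection formula at `u` does the same for `log Γ(1-u)`. Derivatives of order at
least two do not see the affine part.
-/

theorem Real.analyticAt_Gamma {x : ℝ} (hx : Gamma x ≠ 0) : AnalyticAt ℝ Gamma x := by
  have hx' : Complex.Gamma x ≠ 0 := by rwa [Complex.Gamma_ofReal, Complex.ofReal_ne_zero]
  have h : AnalyticAt ℂ Complex.Gamma x := by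
    simpa [Pi.inv_def, inv_inv] using
      (Complex.differentiable_one_div_Gamma.analyticAt (x : ℂ)).inv (inv_ne_zero hx')
  refine ((Complex.reCLM.analyticAt _).comp
    (h.restrictScalars.comp (Complex.ofRealCLM.analyticAt x))).congr (.of_forall fun t => ?_)
  simp [Complex.Gamma_ofReal]

theorem ContDiffAt.log_Gamma {n : WithTop ℕ∞} {f : ℝ → ℝ} {x : ℝ} (hf : ContDiffAt ℝ n f x)
    (hx : Gamma (f x) ≠ 0) : ContDiffAt ℝ n (fun y => Real.log (Gamma (f y))) x :=
  ((analyticAt_Gamma hx).contDiffAt.comp x hf).log hx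

theorem Real.log_Gamma_add_log_Gamma_add_half {s : ℝ} (hs : Gamma (2 * s) ≠ 0) :
    log (Gamma s) + log (Gamma (s + 1 / 2)) =
      log (Gamma (2 * s)) + (1 - 2 * s) * log 2 + log π / 2 := by
  have hdup := Gamma_mul_Gamma_add_half s
  have hne : Gamma s * Gamma (s + 1 / 2) ≠ 0 := by rw [hdup]; positivity
  rw [← log_mul (left_ne_zero_of_mul hne) (right_ne_zero_of_mul hne), hdup,
    log_mul (by positivity) (by positivity), log_mul hs (by positivity),
    log_rpow two_pos, log_sqrt pi_pos.le]

theorem Real.log_Gamma_add_log_Gamma_one_sub {s : ℝ} (hs : sin (π * s) ≠ 0) :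
    log (Gamma s) + log (Gamma (1 - s)) = log π - log (sin (π * s)) := by
  have hrefl := Gamma_mul_Gamma_one_sub s
  have hne : Gamma s * Gamma (1 - s) ≠ 0 := by rw [hrefl]; exact div_ne_zero pi_ne_zero hs
  rw [← log_mul (left_ne_zero_of_mul hne) (right_ne_zero_of_mul hne), hrefl,
    log_div pi_ne_zero hs]

theorem Real.log_Gamma_eq_log_Gamma_half_sub_log_cos {u : ℝ} (hu : Gamma u ≠ 0)
    (hcos : cos (π * u / 2) ≠ 0) :
    log (Gamma u) = log (Gamma (u / 2)) - log (Gamma ((1 - u) / 2)) - log (cos (π * u / 2)) +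
      (log 2 * u + (log π / 2 - log 2)) := by
  have hdup := log_Gamma_add_log_Gamma_add_half (s := u / 2)
    (by rwa [mul_div_cancel₀ u two_ne_zero])
  have hrefl := log_Gamma_add_log_Gamma_one_sub (s := u / 2 + 1 / 2)
  rw [show π * (u / 2 + 1 / 2) = π * u / 2 + π / 2 by ring, sin_add_pi_div_two,
    show 1 - (u / 2 + 1 / 2) = (1 - u) / 2 by ring] at hrefl
  rw [mul_div_cancel₀ u two_ne_zero] at hdup
  linarith [hrefl hcos]

theorem Real.log_Gamma_one_sub_eq_log_Gamma_half_sub_log_sin {u : ℝ} (hsin : sin (π * u) ≠ 0) :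
    log (Gamma (1 - u)) = -log (Gamma (u / 2)) + log (Gamma ((1 - u) / 2)) -
      log (sin (π * u / 2)) + (-log 2 * u + log π / 2) := by
  have hΓ : Gamma u ≠ 0 := left_ne_zero_of_mul (b := Gamma (1 - u)) <| by
    rw [Gamma_mul_Gamma_one_sub]; exact div_ne_zero pi_ne_zero hsin
  have hdouble : sin (π * u) = 2 * sin (π * u / 2) * cos (π * u / 2) := by
    rw [← sin_two_mul]; ring_nf
  have hrefl := log_Gamma_add_log_Gamma_one_sub hsin
  rw [hdouble] at hsin hrefl
  rw [log_mul (left_ne_zero_of_mul hsin) (right_ne_zero_of_mul hsin),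
    log_mul two_ne_zero (right_ne_zero_of_mul (left_ne_zero_of_mul hsin))] at hrefl
  linarith [log_Gamma_eq_log_Gamma_half_sub_log_cos hΓ (right_ne_zero_of_mul hsin)]

theorem Real.cos_pi_mul_div_two_pos {u : ℝ} (h₀ : -1 < u) (h₁ : u < 1) : 0 < cos (π * u / 2) :=
  cos_pos_of_mem_Ioo ⟨by nlinarith [pi_pos], by nlinarith [pi_pos]⟩

section Affine

variable {𝕜 : Type*} [NontriviallyNormedField 𝕜]

theorem iteratedDeriv_affine (a b : 𝕜) {n : ℕ} (hn : 2 ≤ n) (x : 𝕜) :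
    iteratedDeriv n (fun y => a * y + b) x = 0 := by
  rw [iteratedDeriv_fun_add (by fun_prop) (by fun_prop), iteratedDeriv_const_mul_field,
    iteratedDeriv_fun_id, iteratedDeriv_const]
  simp [show n ≠ 0 by omega, show n ≠ 1 by omega]

theorem iteratedDeriv_eq_of_eventuallyEq_add_affine {f g : 𝕜 → 𝕜} {a b x : 𝕜} {n : ℕ}
    (hn : 2 ≤ n) (hg : ContDiffAt 𝕜 n g x) (hfg : f =ᶠ[𝓝 x] fun y => g y + (a * y + b)) :
    iteratedDeriv n f x = iteratedDeriv n g x := by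
  rw [hfg.iteratedDeriv_eq, iteratedDeriv_fun_add hg (by fun_prop), iteratedDeriv_affine a b hn,
    add_zero]

end Affine

theorem logGamma_deriv_decompositions (n : ℕ) (hn : 1 ≤ n) (s : ℝ)
    (hs0 : 0 < s) (hs1 : s < 1) :
    (iteratedDeriv (2*n+1) (fun x : ℝ => Real.log (Real.Gamma x)) s =
        iteratedDeriv (2*n+1) (fun x : ℝ => Real.log (Real.Gamma (x/2))) s -
          iteratedDeriv (2*n+1) (fun x : ℝ => Real.log (Real.Gamma ((1-x)/2))) s -
          iteratedDeriv (2*n+1) (fun x : ℝ => Real.log (Real.cos (Real.pi * x / 2))) s) ∧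
      (iteratedDeriv (2*n+1) (fun x : ℝ => Real.log (Real.Gamma (1-x))) s =
        - iteratedDeriv (2*n+1) (fun x : ℝ => Real.log (Real.Gamma (x/2))) s +
          iteratedDeriv (2*n+1) (fun x : ℝ => Real.log (Real.Gamma ((1-x)/2))) s -
          iteratedDeriv (2*n+1) (fun x : ℝ => Real.log (Real.sin (Real.pi * x / 2))) s) := by
  have hm : 2 ≤ 2 * n + 1 := by omega
  have hnhds : Set.Ioo (0 : ℝ) 1 ∈ 𝓝 s := Ioo_mem_nhds hs0 hs1
  have hΓ₁ : ContDiffAt ℝ (2 * n + 1) (fun x => log (Gamma (x / 2))) s :=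
    (by fun_prop : ContDiffAt ℝ _ (· / 2) s).log_Gamma (Gamma_pos_of_pos (by linarith)).ne'
  have hΓ₂ : ContDiffAt ℝ (2 * n + 1) (fun x => log (Gamma ((1 - x) / 2))) s :=
    (by fun_prop : ContDiffAt ℝ _ (fun x => (1 - x) / 2) s).log_Gamma
      (Gamma_pos_of_pos (by linarith)).ne'
  have hcos : ContDiffAt ℝ (2 * n + 1) (fun x => log (cos (π * x / 2))) s :=
    (by fun_prop : ContDiffAt ℝ _ (fun x => cos (π * x / 2)) s).log
      (cos_pi_mul_div_two_pos (by linarith) hs1).ne'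
  have hsin : ContDiffAt ℝ (2 * n + 1) (fun x => log (sin (π * x / 2))) s :=
    (by fun_prop : ContDiffAt ℝ _ (fun x => sin (π * x / 2)) s).log
      (sin_pos_of_pos_of_lt_pi (by positivity) (by nlinarith [pi_pos])).ne'
  constructor
  · rw [iteratedDeriv_eq_of_eventuallyEq_add_affine hm ((hΓ₁.sub hΓ₂).sub hcos) <| by
        filter_upwards [hnhds] with u hu
        exact log_Gamma_eq_log_Gamma_half_sub_log_cos (Gamma_pos_of_pos hu.1).ne'
          (cos_pi_mul_div_two_pos (by linarith [hu.1]) hu.2).ne',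
      iteratedDeriv_fun_sub (hΓ₁.sub hΓ₂) hcos, iteratedDeriv_fun_sub hΓ₁ hΓ₂]
  · rw [iteratedDeriv_eq_of_eventuallyEq_add_affine hm ((hΓ₁.neg.add hΓ₂).sub hsin) <| by
        filter_upwards [hnhds] with u hu
        exact log_Gamma_one_sub_eq_log_Gamma_half_sub_log_sin (sin_pos_of_pos_of_lt_pi
          (mul_pos pi_pos hu.1) (mul_lt_of_lt_one_right pi_pos hu.2)).ne',
      iteratedDeriv_fun_sub (hΓ₁.neg.add hΓ₂) hsin, iteratedDeriv_fun_add hΓ₁.neg hΓ₂,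
      iteratedDeriv_fun_neg]
end

section
/- For every complex number s with s ≠ -1, s ≠ 0, s ≠ 1 and s ≠ 2, one has ζ(s) · ζ((1-s)/2) · ζ(1 - s/2) · sin(π(s+1)/4) = (2 : ℂ)^(1/2 - s) · ζ(1-s) · ζ((s+1)/2) · ζ(s/2) · sin(π(2-s)/4). (This is the multiplicative form of the identity log(ζ(s)/ζ(1-s)) = log(ζ((s+1)/2)/ζ(1-(s+1)/2) · ζ(s/2)/ζ(1-s/2)) - (s-1/2)·log 2 - log(sin(π(s+1)/4)/sin(π(1-s/2)/2)).) -/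
/-!
Write `ζ(1 - s) = χ(s) ζ(s)` with `χ(s) = 2 (2π)^(-s) Γ(s) cos(πs/2)` (the functional equation).
Applying it at `s`, `(s + 1)/2` and `s/2` turns the identity into
`χ(s/2) χ((s+1)/2) sin(π(s+1)/4) = 2^(1/2-s) χ(s) sin(π(2-s)/4)`, which follows from Legendre's
duplication formula for `Γ` and `2 sin x cos x = sin 2x`. Off the real axis all three
functional equations apply; both sides being continuous away from the poles of the zeta factors,
the identity extends to the closure of `{z | z.im ≠ 0}`, i.e. to all admissible `s`.
-/

open Complex Real

noncomputable def zetaFunctionalFactor (s : ℂ) : ℂ :=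
  2 * (2 * π) ^ (-s) * Gamma s * Complex.cos (π * s / 2)

theorem riemannZeta_one_sub_of_im_ne_zero {s : ℂ} (hs : s.im ≠ 0) :
    riemannZeta (1 - s) = zetaFunctionalFactor s * riemannZeta s := by
  refine riemannZeta_one_sub (fun n h => hs ?_) (fun h => hs ?_) <;> simp [h]

theorem two_mul_pi_cpow_neg_half_mul_sqrt_pi :
    (2 * π : ℂ) ^ (-(1 / 2) : ℂ) * ((√π : ℝ) : ℂ) = (2 : ℂ) ^ (-(1 / 2) : ℂ) := by
  have hπ : (π : ℂ) ^ (-(1 / 2) : ℂ) * ((√π : ℝ) : ℂ) = 1 := by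
    rw [Real.sqrt_eq_rpow, ofReal_cpow Real.pi_pos.le,
      show ((1 / 2 : ℝ) : ℂ) = 1 / 2 by push_cast; ring,
      ← cpow_add _ _ (ofReal_ne_zero.2 Real.pi_ne_zero)]
    norm_num
  have hsplit := mul_cpow_ofReal_nonneg zero_le_two Real.pi_pos.le (-(1 / 2))
  push_cast at hsplit
  rw [hsplit, mul_assoc, hπ, mul_one]

theorem zetaFunctionalFactor_half_mul_add_one_half (s : ℂ) :
    zetaFunctionalFactor (s / 2) * zetaFunctionalFactor ((s + 1) / 2) *
        Complex.sin (π * (s + 1) / 4) =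
      (2 : ℂ) ^ (1 / 2 - s : ℂ) * zetaFunctionalFactor s * Complex.sin (π * (2 - s) / 4) := by
  have h2π : (2 * π : ℂ) ≠ 0 := by simp
  have hpow : (2 * π : ℂ) ^ (-(s / 2)) * (2 * π : ℂ) ^ (-((s + 1) / 2)) =
      (2 * π : ℂ) ^ (-s) * (2 * π : ℂ) ^ (-(1 / 2) : ℂ) := by
    rw [← cpow_add _ _ h2π, ← cpow_add _ _ h2π]; ring_nf
  have hGamma : Gamma (s / 2) * Gamma ((s + 1) / 2) = Gamma s * 2 ^ (1 - s) * ((√π : ℝ) : ℂ) := by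
    have h := Gamma_mul_Gamma_add_half (s / 2)
    rwa [show s / 2 + 1 / 2 = (s + 1) / 2 by ring, mul_div_cancel₀ s two_ne_zero] at h
  have hsincos : Complex.sin (π * (s + 1) / 4) * Complex.cos (π * ((s + 1) / 2) / 2) =
      Complex.cos (π * s / 2) / 2 := by
    have h := Complex.sin_two_mul (π * (s + 1) / 4)
    rw [show 2 * (π * (s + 1) / 4) = π * s / 2 + π / 2 by ring, Complex.sin_add_pi_div_two] at h
    rw [show π * ((s + 1) / 2) / 2 = π * (s + 1) / 4 by ring]
    linear_combination -h / 2
  have hsin : Complex.sin (π * (2 - s) / 4) = Complex.cos (π * (s / 2) / 2) := by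
    rw [← Complex.sin_pi_div_two_sub]; ring_nf
  have htwo : (2 : ℂ) ^ (-(1 / 2) : ℂ) * 2 ^ (1 - s) = 2 ^ (1 / 2 - s : ℂ) := by
    rw [← cpow_add _ _ two_ne_zero]; ring_nf
  simp only [zetaFunctionalFactor]
  rw [hsin, ← htwo, ← two_mul_pi_cpow_neg_half_mul_sqrt_pi]
  linear_combination (4 * (2 * π : ℂ) ^ (-(s / 2)) * (2 * π : ℂ) ^ (-((s + 1) / 2)) *
      Complex.cos (π * (s / 2) / 2) * Complex.cos (π * ((s + 1) / 2) / 2) *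
      Complex.sin (π * (s + 1) / 4)) * hGamma
    + (4 * Gamma s * 2 ^ (1 - s) * ((√π : ℝ) : ℂ) * Complex.cos (π * (s / 2) / 2) *
      Complex.cos (π * ((s + 1) / 2) / 2) * Complex.sin (π * (s + 1) / 4)) * hpow
    + (4 * (2 * π : ℂ) ^ (-s) * (2 * π : ℂ) ^ (-(1 / 2) : ℂ) * Gamma s * 2 ^ (1 - s) *
      ((√π : ℝ) : ℂ) * Complex.cos (π * (s / 2) / 2)) * hsincos

theorem zeta_ratio_half_decomposition_of_im_ne_zero {s : ℂ} (hs : s.im ≠ 0) :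
    riemannZeta s * riemannZeta ((1 - s) / 2) * riemannZeta (1 - s / 2) *
        Complex.sin (π * (s + 1) / 4) =
      (2 : ℂ) ^ (1 / 2 - s : ℂ) * riemannZeta (1 - s) * riemannZeta ((s + 1) / 2) *
        riemannZeta (s / 2) * Complex.sin (π * (2 - s) / 4) := by
  have hs₁ : ((s + 1) / 2).im ≠ 0 := by simpa using hs
  have hs₂ : (s / 2).im ≠ 0 := by simpa using hs
  rw [show (1 - s) / 2 = 1 - (s + 1) / 2 by ring, riemannZeta_one_sub_of_im_ne_zero hs,
    riemannZeta_one_sub_of_im_ne_zero hs₁, riemannZeta_one_sub_of_im_ne_zero hs₂]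
  linear_combination (riemannZeta s * riemannZeta ((s + 1) / 2) * riemannZeta (s / 2)) *
    zetaFunctionalFactor_half_mul_add_one_half s

theorem Complex.dense_setOf_im_ne_zero : Dense {z : ℂ | z.im ≠ 0} := by
  intro z
  rw [show {z : ℂ | z.im ≠ 0} = Complex.im ⁻¹' {0}ᶜ from rfl, closure_preimage_im, closure_compl_singleton]
  trivial

theorem Set.EqOn.eq_of_continuousAt_of_mem_closure {X Y : Type*} [TopologicalSpace X]
    [TopologicalSpace Y] [T2Space Y] {f g : X → Y} {t : Set X} {x : X} (hfg : Set.EqOn f g t)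
    (hf : ContinuousAt f x) (hg : ContinuousAt g x) (hx : x ∈ closure t) : f x = g x := by
  have := mem_closure_iff_nhdsWithin_neBot.1 hx
  exact tendsto_nhds_unique_of_eventuallyEq (hf.mono_left nhdsWithin_le_nhds)
    (hg.mono_left nhdsWithin_le_nhds) (eventually_nhdsWithin_of_forall hfg)

@[fun_prop]
theorem ContinuousAt.riemannZeta {f : ℂ → ℂ} {s : ℂ} (hf : ContinuousAt f s) (h : f s ≠ 1) :
    ContinuousAt (fun z ↦ riemannZeta (f z)) s :=
  (differentiableAt_riemannZeta h).continuousAt.comp hf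

theorem zeta_ratio_half_decomposition (s : ℂ) (hm1 : s ≠ -1) (h0 : s ≠ 0) (h1 : s ≠ 1)
    (h2 : s ≠ 2) :
    riemannZeta s * riemannZeta ((1 - s)/2) * riemannZeta (1 - s/2) *
        Complex.sin ((Real.pi : ℂ) * (s + 1) / 4) =
      (2 : ℂ) ^ (1/2 - s : ℂ) * riemannZeta (1 - s) * riemannZeta ((s + 1)/2) *
        riemannZeta (s/2) * Complex.sin ((Real.pi : ℂ) * (2 - s) / 4) := by
  have h₁ : (1 - s) / 2 ≠ 1 := by contrapose! hm1; linear_combination -2 * hm1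
  have h₂ : 1 - s / 2 ≠ 1 := by contrapose! h0; linear_combination -2 * h0
  have h₃ : 1 - s ≠ 1 := by contrapose! h0; linear_combination -h0
  have h₄ : (s + 1) / 2 ≠ 1 := by contrapose! h1; linear_combination 2 * h1
  have h₅ : s / 2 ≠ 1 := by contrapose! h2; linear_combination 2 * h2
  refine Set.EqOn.eq_of_continuousAt_of_mem_closure (t := {z : ℂ | z.im ≠ 0})
    (fun z hz ↦ zeta_ratio_half_decomposition_of_im_ne_zero hz) ?_ ?_ (dense_setOf_im_ne_zero s)
  · fun_prop (disch := assumption)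
  · fun_prop (disch := assumption)
end

section
/- For every complex number s with s ≠ -1, s ≠ 0 and s ≠ 1, one has ζ(1+s)^2 · ζ(1-s)^2 · s^2 · sin(π(s+2)/4) · sin(π·s/4) · sin(π(2-s)/4) · sin(π(4-s)/4) = (2·π·I)^2 · ζ(s)^2 · ζ(-s)^2 · sin(π(s+1)/4) · sin(π(s-1)/4) · sin(π(1-s)/4) · sin(π(3-s)/4). (This is the multiplicative form of the identity log(ζ^2(1+s)/ζ^2(-s)) = -log(ζ^2(1-s)/ζ^2(s)) - log(s^2/(2πi)^2) - log(sin(π(s+2)/4)/sin(π(1-s)/4)) + log(sin(π(s+1)/4)/sin(π(2-s)/4)) - log(sin(πs/4)/sin(π(3-s)/4)) + log(sin(π(s-1)/4)/sin(π(4-s)/4)).) -/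
/-!
With `x = πs/4`, the four sines on the left multiply to `sin²(πs/2)/4` and those on the right to
`-cos²(πs/2)/4`, so the identity is the square of
`ζ(1+s) ζ(1-s) s sin(πs/2) = -2π cos(πs/2) ζ(s) ζ(-s)`.
For non-integral `s` this is the product of the functional equations for `ζ(1-s)` and `ζ(1+s)`,
simplified by `Γ(s) Γ(-s) = -π / (s sin πs)`; at integers other than `-1, 0, 1` both sides vanish
because one of `ζ(1 ± s)`, `ζ(±s)` is a trivial zero while `sin(πs/2)` or `cos(πs/2)` is `0`.
-/

open Complex
open scoped Real

/-- At integers both sides are `0`: `Γ` vanishes at its poles and `x / 0 = 0`. -/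
theorem Complex.Gamma_mul_Gamma_neg (s : ℂ) : Gamma s * Gamma (-s) = -π / (s * sin (π * s)) := by
  rcases eq_or_ne s 0 with rfl | hs
  · simp
  have hΓ : Gamma (1 - s) = -s * Gamma (-s) := by
    rw [sub_eq_neg_add, Gamma_add_one _ (neg_ne_zero.mpr hs)]
  rw [mul_comm s, ← div_div, neg_div, ← Gamma_mul_Gamma_one_sub, hΓ]
  field_simp

theorem riemannZeta_one_add_mul_riemannZeta_one_sub {s : ℂ} (hs : ∀ n : ℤ, s ≠ n) :
    riemannZeta (1 + s) * riemannZeta (1 - s) =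
      4 * Gamma s * Gamma (-s) * cos (π * s / 2) ^ 2 * riemannZeta s * riemannZeta (-s) := by
  have hs' : ∀ n : ℕ, s ≠ -n := fun n h => hs (-n) (by push_cast; exact h)
  have hs'' : ∀ n : ℕ, -s ≠ -n := fun n h => hs n (neg_injective h)
  have hpow : (2 * (π : ℂ)) ^ (-s) * (2 * (π : ℂ)) ^ (-(-s)) = 1 := by
    rw [← cpow_add _ _ (by simp [Real.pi_ne_zero])]; simp
  have hs1 : s ≠ 1 := by simpa using hs 1
  have hs1' : -s ≠ 1 := fun h => hs (-1) (by push_cast; linear_combination -h)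
  rw [riemannZeta_one_sub hs' hs1, ← sub_neg_eq_add, riemannZeta_one_sub hs'' hs1', mul_neg,
    neg_div, cos_neg]
  linear_combination (4 * Gamma s * Gamma (-s) * cos (π * s / 2) ^ 2 * riemannZeta s *
    riemannZeta (-s)) * hpow

theorem riemannZeta_one_add_mul_one_sub_mul_sin_of_ne_intCast {s : ℂ}
    (hs : ∀ n : ℤ, s ≠ n) :
    riemannZeta (1 + s) * riemannZeta (1 - s) * s * sin (π * s / 2) =
      -2 * π * cos (π * s / 2) * riemannZeta s * riemannZeta (-s) := by
  have hsin : sin (π * s) ≠ 0 := by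
    rw [sin_ne_zero_iff]
    intro k hk
    exact hs k (mul_left_cancel₀ (ofReal_ne_zero.mpr Real.pi_ne_zero) (by rw [hk]; ring))
  have hdouble : sin (π * s) = 2 * sin (π * s / 2) * cos (π * s / 2) := by
    rw [← sin_two_mul]; ring_nf
  rw [hdouble] at hsin
  have hsin2 : sin (π * s / 2) ≠ 0 := by intro h; simp [h] at hsin
  have hcos2 : cos (π * s / 2) ≠ 0 := by intro h; simp [h] at hsin
  have hs0 : s ≠ 0 := by simpa using hs 0
  rw [riemannZeta_one_add_mul_riemannZeta_one_sub hs, mul_assoc 4, Gamma_mul_Gamma_neg, hdouble]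
  field_simp
  ring

theorem riemannZeta_one_add_mul_one_sub_mul_sin_natCast {m : ℕ} (hm : 2 ≤ m) :
    riemannZeta (1 + m) * riemannZeta (1 - m) * m * sin (π * m / 2) =
      -2 * π * cos (π * m / 2) * riemannZeta m * riemannZeta (-m) := by
  obtain ⟨k, rfl | rfl⟩ := Nat.even_or_odd' m
  · obtain ⟨j, rfl⟩ : ∃ j, k = j + 1 := ⟨k - 1, by omega⟩
    have hsin : sin (π * ((2 * (j + 1) : ℕ) : ℂ) / 2) = 0 := by
      rw [sin_eq_zero_iff]; exact ⟨j + 1, by push_cast; ring⟩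
    have hzeta : riemannZeta (-((2 * (j + 1) : ℕ) : ℂ)) = 0 := by
      rw [← riemannZeta_neg_two_mul_nat_add_one j]; push_cast; ring_nf
    rw [hsin, hzeta]; ring
  · obtain ⟨j, rfl⟩ : ∃ j, k = j + 1 := ⟨k - 1, by omega⟩
    have hcos : cos (π * ((2 * (j + 1) + 1 : ℕ) : ℂ) / 2) = 0 := by
      rw [cos_eq_zero_iff]; exact ⟨j + 1, by push_cast; ring⟩
    have hzeta : riemannZeta (1 - ((2 * (j + 1) + 1 : ℕ) : ℂ)) = 0 := by
      rw [← riemannZeta_neg_two_mul_nat_add_one j]; push_cast; ring_nf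
    rw [hcos, hzeta]; ring

theorem riemannZeta_one_add_mul_one_sub_mul_sin {s : ℂ} (hm1 : s ≠ -1) (h0 : s ≠ 0)
    (h1 : s ≠ 1) :
    riemannZeta (1 + s) * riemannZeta (1 - s) * s * sin (π * s / 2) =
      -2 * π * cos (π * s / 2) * riemannZeta s * riemannZeta (-s) := by
  by_cases hint : ∀ n : ℤ, s ≠ n
  · exact riemannZeta_one_add_mul_one_sub_mul_sin_of_ne_intCast hint
  push Not at hint
  obtain ⟨n, rfl⟩ := hint
  obtain ⟨m, hm, rfl | rfl⟩ : ∃ m : ℕ, 2 ≤ m ∧ (n = m ∨ n = -m) := by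
    have hn1 : n ≠ -1 := by exact_mod_cast hm1
    have hn0 : n ≠ 0 := by exact_mod_cast h0
    have hn2 : n ≠ 1 := by exact_mod_cast h1
    exact ⟨n.natAbs, by omega, by omega⟩
  · exact_mod_cast riemannZeta_one_add_mul_one_sub_mul_sin_natCast hm
  · have := riemannZeta_one_add_mul_one_sub_mul_sin_natCast hm
    push_cast
    simp only [mul_neg, neg_div, sin_neg, cos_neg, neg_neg, sub_neg_eq_add, ← sub_eq_add_neg]
    linear_combination this

theorem sin_pi_div_four_product_eq_sin_sq (z : ℂ) :
    sin (π * (z + 2) / 4) * sin (π * z / 4) * sin (π * (2 - z) / 4) * sin (π * (4 - z) / 4) =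
      sin (π * z / 2) ^ 2 / 4 := by
  rw [show π * (z + 2) / 4 = π * z / 4 + π / 2 by ring, sin_add_pi_div_two,
    show π * (2 - z) / 4 = π / 2 - π * z / 4 by ring, sin_pi_div_two_sub,
    show π * (4 - z) / 4 = π - π * z / 4 by ring, sin_pi_sub,
    show π * z / 2 = 2 * (π * z / 4) by ring, sin_two_mul]
  ring

theorem sin_pi_div_four_product_eq_neg_cos_sq (z : ℂ) :
    sin (π * (z + 1) / 4) * sin (π * (z - 1) / 4) * sin (π * (1 - z) / 4) *
        sin (π * (3 - z) / 4) = -cos (π * z / 2) ^ 2 / 4 := by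
  have hprod : sin (π * (z + 1) / 4) * sin (π * (z - 1) / 4) = -cos (π * z / 2) / 2 := by
    have := cos_sub_cos (π * z / 2) (π / 2)
    rw [cos_pi_div_two, sub_zero] at this
    rw [this]; ring_nf
  rw [show π * (1 - z) / 4 = -(π * (z - 1) / 4) by ring, sin_neg,
    show π * (3 - z) / 4 = π - π * (z + 1) / 4 by ring, sin_pi_sub]
  linear_combination (cos (π * z / 2) / 2 - sin (π * (z + 1) / 4) * sin (π * (z - 1) / 4)) * hprod

theorem zeta_sq_reflection_identity (s : ℂ) (hm1 : s ≠ -1) (h0 : s ≠ 0) (h1 : s ≠ 1) :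
    riemannZeta (1 + s)^2 * riemannZeta (1 - s)^2 * s^2 *
        Complex.sin ((Real.pi : ℂ) * (s + 2) / 4) *
        Complex.sin ((Real.pi : ℂ) * s / 4) *
        Complex.sin ((Real.pi : ℂ) * (2 - s) / 4) *
        Complex.sin ((Real.pi : ℂ) * (4 - s) / 4) =
      (2 * (Real.pi : ℂ) * Complex.I)^2 * riemannZeta s^2 * riemannZeta (-s)^2 *
        Complex.sin ((Real.pi : ℂ) * (s + 1) / 4) *
        Complex.sin ((Real.pi : ℂ) * (s - 1) / 4) *
        Complex.sin ((Real.pi : ℂ) * (1 - s) / 4) *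
        Complex.sin ((Real.pi : ℂ) * (3 - s) / 4) := by
  have key := riemannZeta_one_add_mul_one_sub_mul_sin hm1 h0 h1
  have hlhs := sin_pi_div_four_product_eq_sin_sq s
  have hrhs := sin_pi_div_four_product_eq_neg_cos_sq s
  simp only [mul_assoc] at hlhs hrhs ⊢
  rw [hlhs, hrhs, mul_pow, mul_pow, I_sq]
  linear_combination
    (riemannZeta (1 + s) * riemannZeta (1 - s) * s * sin (π * s / 2) -
      2 * π * cos (π * s / 2) * riemannZeta s * riemannZeta (-s)) / 4 * key
end

section
/- For every complex number s with s ∉ {-5, -4, -3, 3, 4, 5}, one has ζ(-3-s) · ζ(4-s) · ζ(s-4) · ζ(5+s) · (s+4) = ζ(s+4) · ζ(s-3) · ζ(5-s) · ζ(-s-4) · (s-4). (This is the multiplicative form of the identity -log(ζ(s+4)/ζ(-3-s)) + log(ζ(-s+4)/ζ(-3+s)) = -log(ζ(s-4)/ζ(5-s)) + log(ζ(-s-4)/ζ(5+s)) + log((s-4)/(s+4)).) -/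
/-!
Put `a = s + 4` and `b = 4 - s`; the identity reads
`a ζ(1-a) ζ(1+a) ζ(b) ζ(-b) = -b ζ(a) ζ(-a) ζ(1-b) ζ(1+b)`.
The functional equation at `w` and `-w`, together with `Γ(w) Γ(-w) = -π / (w sin πw)`, gives
`w sin(πw/2) ζ(1-w) ζ(1+w) = -2π cos(πw/2) ζ(w) ζ(-w)` for every `w ∉ {0, 1, -1}`
(at the remaining integers both sides vanish by the trivial zeros). Since `πa/2 ≡ πs/2` and
`πb/2 ≡ -πs/2` modulo `2π`, the two instances show that both `sin(πs/2)` and `cos(πs/2)` annihilate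
the difference of the two sides, which therefore vanishes.
-/

open Complex
open scoped Real

lemma riemannZeta_intCast_of_even_of_neg {n : ℤ} (he : Even n) (hn : n < 0) :
    riemannZeta n = 0 := by
  obtain ⟨k, rfl⟩ : ∃ k : ℕ, n = -2 * ((k : ℤ) + 1) := ⟨((-n - 2) / 2).toNat, by grind⟩
  exact_mod_cast riemannZeta_neg_two_mul_nat_add_one k

lemma riemannZeta_intCast_mul_riemannZeta_neg_of_even {n : ℤ} (he : Even n) (h0 : n ≠ 0) :
    riemannZeta n * riemannZeta (-n) = 0 := by
  rcases h0.lt_or_gt with hn | hn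
  · rw [riemannZeta_intCast_of_even_of_neg he hn, zero_mul]
  · have := riemannZeta_intCast_of_even_of_neg he.neg (neg_neg_of_pos hn)
    push_cast at this
    rw [this, mul_zero]

lemma riemannZeta_one_sub_intCast_mul_riemannZeta_one_add_of_odd {n : ℤ} (ho : Odd n)
    (h1 : n ≠ 1) (h2 : n ≠ -1) : riemannZeta (1 - n) * riemannZeta (1 + n) = 0 := by
  rcases lt_or_gt_of_ne h1 with hn | hn
  · have := riemannZeta_intCast_of_even_of_neg (n := 1 + n) (by grind) (by grind)
    push_cast at this
    rw [this, mul_zero]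
  · have := riemannZeta_intCast_of_even_of_neg (n := 1 - n) (by grind) (by grind)
    push_cast at this
    rw [this, zero_mul]

lemma Complex.mul_sin_mul_Gamma_mul_Gamma_neg {w : ℂ} (hw : ∀ n : ℤ, w ≠ n) :
    w * sin (π * w) * Gamma w * Gamma (-w) = -π := by
  have hsin : sin (π * w) ≠ 0 := by
    rw [Ne, sin_eq_zero_iff]
    rintro ⟨k, hk⟩
    exact hw k (mul_left_cancel₀ (ofReal_ne_zero.mpr Real.pi_ne_zero) (by rw [hk]; ring))
  have hΓ : Gamma (1 - w) = -w * Gamma (-w) := by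
    rw [← Gamma_add_one _ (neg_ne_zero.mpr (by exact_mod_cast hw 0)), neg_add_eq_sub]
  have := Gamma_mul_Gamma_one_sub w
  rw [hΓ, eq_div_iff hsin] at this
  linear_combination -this

lemma riemannZeta_one_sub_mul_riemannZeta_one_add_of_ne_intCast {w : ℂ} (hw : ∀ n : ℤ, w ≠ n) :
    w * sin (π * w / 2) * (riemannZeta (1 - w) * riemannZeta (1 + w)) =
      -2 * π * cos (π * w / 2) * (riemannZeta w * riemannZeta (-w)) := by
  have hnat (v : ℂ) (hv : ∀ n : ℤ, v ≠ n) : ∀ n : ℕ, v ≠ -n := fun n => by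
    exact_mod_cast hv (-n)
  have hw' : ∀ n : ℤ, -w ≠ n := fun n h => hw (-n) (by push_cast; linear_combination -h)
  have e₁ := riemannZeta_one_sub (hnat w hw) (by exact_mod_cast hw 1)
  have e₂ := riemannZeta_one_sub (hnat (-w) hw') (by exact_mod_cast hw' 1)
  have h2π : (2 * π : ℂ) ≠ 0 := by simp [Real.pi_ne_zero]
  have hpow : (2 * π : ℂ) ^ (-w) * (2 * π : ℂ) ^ (-(-w)) = 1 := by
    rw [neg_neg, cpow_neg, inv_mul_cancel₀ (cpow_ne_zero_iff_of_exponent_ne_zero ?_ |>.mpr h2π)]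
    exact_mod_cast hw 0
  have hΓ := mul_sin_mul_Gamma_mul_Gamma_neg hw
  rw [show π * w = 2 * (π * w / 2) by ring, sin_two_mul] at hΓ
  rw [sub_neg_eq_add] at e₂
  rw [e₁, e₂, show π * -w / 2 = -(π * w / 2) by ring, cos_neg]
  linear_combination
    (2 * cos (π * w / 2) * riemannZeta w * riemannZeta (-w)) * hΓ +
    (4 * w * sin (π * w / 2) * Gamma w * Gamma (-w) * cos (π * w / 2) ^ 2 *
      riemannZeta w * riemannZeta (-w)) * hpow

theorem riemannZeta_one_sub_mul_riemannZeta_one_add {w : ℂ} (h0 : w ≠ 0) (h1 : w ≠ 1)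
    (h2 : w ≠ -1) :
    w * sin (π * w / 2) * (riemannZeta (1 - w) * riemannZeta (1 + w)) =
      -2 * π * cos (π * w / 2) * (riemannZeta w * riemannZeta (-w)) := by
  by_cases hw : ∃ n : ℤ, w = n
  · obtain ⟨n, rfl⟩ := hw
    rcases Int.even_or_odd n with ⟨k, rfl⟩ | ho
    · have hsin : sin (π * ((k + k : ℤ) : ℂ) / 2) = 0 :=
        sin_eq_zero_iff.mpr ⟨k, by push_cast; ring⟩
      rw [hsin, riemannZeta_intCast_mul_riemannZeta_neg_of_even ⟨k, rfl⟩ (by exact_mod_cast h0)]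
      ring
    · obtain ⟨k, rfl⟩ := ho
      have hcos : cos (π * ((2 * k + 1 : ℤ) : ℂ) / 2) = 0 :=
        cos_eq_zero_iff.mpr ⟨k, by push_cast; ring⟩
      rw [hcos, riemannZeta_one_sub_intCast_mul_riemannZeta_one_add_of_odd ⟨k, rfl⟩
        (by exact_mod_cast h1) (by exact_mod_cast h2)]
      ring
  · exact riemannZeta_one_sub_mul_riemannZeta_one_add_of_ne_intCast fun n h => hw ⟨n, h⟩

theorem zeta_shift_four_identity (s : ℂ)
    (hs : s ∉ ({-5, -4, -3, 3, 4, 5} : Set ℂ)) :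
    riemannZeta (-3 - s) * riemannZeta (4 - s) * riemannZeta (s - 4) * riemannZeta (5 + s) *
        (s + 4) =
      riemannZeta (s + 4) * riemannZeta (s - 3) * riemannZeta (5 - s) * riemannZeta (-s - 4) *
        (s - 4) := by
  simp only [Set.mem_insert_iff, Set.mem_singleton_iff, not_or] at hs
  obtain ⟨h₁, h₂, h₃, h₄, h₅, h₆⟩ := hs
  have ha := riemannZeta_one_sub_mul_riemannZeta_one_add (w := s + 4)
    (by grind) (by grind) (by grind)
  have hb := riemannZeta_one_sub_mul_riemannZeta_one_add (w := 4 - s)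
    (by grind) (by grind) (by grind)
  set θ := π * s / 2
  rw [show π * (s + 4) / 2 = θ + 2 * π by ring, sin_add_two_pi, cos_add_two_pi] at ha
  rw [show π * (4 - s) / 2 = 2 * π - θ by ring, sin_two_pi_sub, cos_two_pi_sub] at hb
  rw [show 1 - (s + 4) = -3 - s by ring, show 1 + (s + 4) = 5 + s by ring,
    show -(s + 4) = -s - 4 by ring] at ha
  rw [show 1 - (4 - s) = s - 3 by ring, show 1 + (4 - s) = 5 - s by ring,
    show -(4 - s) = s - 4 by ring] at hb
  set X := riemannZeta (-3 - s) * riemannZeta (4 - s) * riemannZeta (s - 4) *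
    riemannZeta (5 + s) * (s + 4) - riemannZeta (s + 4) * riemannZeta (s - 3) *
    riemannZeta (5 - s) * riemannZeta (-s - 4) * (s - 4)
  have hsin : sin θ * X = 0 := by
    linear_combination riemannZeta (4 - s) * riemannZeta (s - 4) * ha -
      riemannZeta (s + 4) * riemannZeta (-s - 4) * hb
  have hcos : cos θ * X = 0 := by
    refine (mul_eq_zero.mp ?_).resolve_left (by simp [Real.pi_ne_zero] : (2 * π : ℂ) ≠ 0)
    linear_combination (s + 4) * riemannZeta (-3 - s) * riemannZeta (5 + s) * hb +
      (4 - s) * riemannZeta (s - 3) * riemannZeta (5 - s) * ha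
  linear_combination sin θ * hsin + cos θ * hcos - X * sin_sq_add_cos_sq θ
end

section
/- For every natural number n ≥ 1, ψ^{(2n)}(1/4) - ψ^{(2n)}(3/4) = -(2n)! · 4^{2n+1} · β(2n+1), where β(2n+1) is the Dirichlet beta value ∑' j : ℕ, (-1)^j / (2j+1)^{2n+1}; formally, iteratedDeriv (2n+1) (fun x : ℝ => Real.log (Real.Gamma x)) (1/4) - iteratedDeriv (2n+1) (fun x : ℝ => Real.log (Real.Gamma x)) (3/4) = -((2*n)! : ℝ) * 4^(2*n+1) * ∑' j : ℕ, (-1)^j / (2*j+1)^(2*n+1). -/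
/-!
Differentiating the Bohr–Mollerup approximants `x log N + log N! - ∑_{m ≤ N} log (x + m)` of
`log Γ` term by term gives sequences that converge locally uniformly on `(0, ∞)`, so `log Γ` may be
differentiated through the limit: `ψ(x) = -γ + ∑ ((m + 1)⁻¹ - (x + m)⁻¹)` and, for `k ≥ 1`,
`ψ^{(k)}(x) = (-1)^(k+1) k! ∑ (x + m)^-(k+1)`. Since `(1/4 + m)^-s = 4^s (4m + 1)^-s` and
`(3/4 + m)^-s = 4^s (4m + 3)^-s`, the two series at `1/4` and `3/4` are `4^s` times the even- and
odd-indexed halves of the series for `β(s)`.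
-/

open Real Filter Finset Set Topology
open scoped Nat

theorem summable_inv_add_pow (a : ℝ) {k : ℕ} (hk : 1 < k) :
    Summable fun m : ℕ => ((a + m) ^ k)⁻¹ := by
  have h := (Real.summable_one_div_nat_add_rpow a k).mpr (by exact_mod_cast hk)
  refine Summable.of_norm (h.congr fun m => ?_)
  rw [Real.rpow_natCast, norm_inv, norm_pow, Real.norm_eq_abs, add_comm, one_div]

theorem hasDerivAt_inv_add_pow (j : ℕ) {c x : ℝ} (h : x + c ≠ 0) :
    HasDerivAt (fun y => ((y + c) ^ j)⁻¹) (-j * ((x + c) ^ (j + 1))⁻¹) x := by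
  have := (hasDerivAt_zpow (-j : ℤ) (x + c) (Or.inl h)).comp x ((hasDerivAt_id x).add_const c)
  have hexp : (x + c) ^ ((-j : ℤ) - 1) = ((x + c) ^ (j + 1))⁻¹ := by
    rw [← zpow_natCast, ← zpow_neg]; push_cast; ring_nf
  simpa [Function.comp_def, zpow_neg, hexp] using this

theorem iteratedDeriv_succ_eq_of_hasDerivAt {𝕜 F : Type*} [NontriviallyNormedField 𝕜]
    [NormedAddCommGroup F] [NormedSpace 𝕜 F] {s : Set 𝕜} (hs : IsOpen s) {f : 𝕜 → F}
    {g : ℕ → 𝕜 → F} (hf : ∀ x ∈ s, HasDerivAt f (g 0 x) x)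
    (hg : ∀ k, ∀ x ∈ s, HasDerivAt (g k) (g (k + 1) x) x) (k : ℕ) {x : 𝕜} (hx : x ∈ s) :
    iteratedDeriv (k + 1) f x = g k x := by
  induction k generalizing x with
  | zero => rw [iteratedDeriv_one, (hf x hx).deriv]
  | succ k ih =>
    have h : iteratedDeriv (k + 1) f =ᶠ[𝓝 x] g k :=
      eventually_of_mem (hs.mem_nhds hx) fun y hy => ih hy
    rw [iteratedDeriv_succ, h.deriv_eq, (hg k x hx).deriv]

theorem TendstoUniformlyOn.comp_tendsto {ι ι' α β : Type*} [UniformSpace β] {F : ι → α → β}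
    {f : α → β} {p : Filter ι} {p' : Filter ι'} {s : Set α} (h : TendstoUniformlyOn F f p s)
    {u : ι' → ι} (hu : Tendsto u p' p) : TendstoUniformlyOn (fun n => F (u n)) f p' s :=
  fun _ hV => hu.eventually (h _ hV)

theorem tendstoLocallyUniformlyOn_Ioi_of_Icc {ι β : Type*} [UniformSpace β] {F : ι → ℝ → β}
    {f : ℝ → β} {p : Filter ι} (h : ∀ a b, 0 < a → TendstoUniformlyOn F f p (Icc a b)) :
    TendstoLocallyUniformlyOn F f p (Ioi 0) :=
  tendstoLocallyUniformlyOn_of_forall_exists_nhds fun x hx =>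
    ⟨Icc (x / 2) (x + 1),
      mem_nhdsWithin_of_mem_nhds (Icc_mem_nhds (half_lt_self hx) (lt_add_one x)),
      h _ _ (half_pos hx)⟩

theorem hasDerivAt_sum_inv_add_pow (s : Finset ℕ) (j : ℕ) {x : ℝ} (hx : 0 < x) :
    HasDerivAt (fun y : ℝ => ∑ m ∈ s, ((y + m) ^ j)⁻¹) (-j * ∑ m ∈ s, ((x + m) ^ (j + 1))⁻¹) x := by
  rw [Finset.mul_sum]
  exact HasDerivAt.fun_sum fun m _ => hasDerivAt_inv_add_pow j (by positivity)

namespace LogGamma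

/-- `polygammaSeq N k` is the `(k+1)`-st derivative of `x ↦ BohrMollerup.logGammaSeq x N`, and
`polygamma k` is its limit as `N → ∞`, i.e. `ψ^{(k)}` on `(0, ∞)`. -/
noncomputable def polygammaSeq (N : ℕ) : ℕ → ℝ → ℝ
  | 0 => fun x => log N - ∑ m ∈ range (N + 1), (x + m)⁻¹
  | k + 1 => fun x => (-1) ^ (k + 2) * (k + 1)! * ∑ m ∈ range (N + 1), ((x + m) ^ (k + 2))⁻¹

noncomputable def polygamma : ℕ → ℝ → ℝ
  | 0 => fun x => -eulerMascheroniConstant + ∑' m : ℕ, ((m + 1 : ℝ)⁻¹ - (x + m)⁻¹)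
  | k + 1 => fun x => (-1) ^ (k + 2) * (k + 1)! * ∑' m : ℕ, ((x + m) ^ (k + 2))⁻¹

theorem hasDerivAt_logGammaSeq (N : ℕ) {x : ℝ} (hx : 0 < x) :
    HasDerivAt (fun y => BohrMollerup.logGammaSeq y N) (polygammaSeq N 0 x) x := by
  have hlog : HasDerivAt (fun y => ∑ m ∈ range (N + 1), log (y + m))
      (∑ m ∈ range (N + 1), (x + m)⁻¹) x :=
    HasDerivAt.fun_sum fun m _ => ((hasDerivAt_id x).add_const _).log (by positivity) |>.congr_deriv
      (one_div _)
  simpa [BohrMollerup.logGammaSeq, polygammaSeq] using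
    (((hasDerivAt_id x).mul_const (log N)).add_const (log N !)).fun_sub hlog

theorem hasDerivAt_polygammaSeq (N k : ℕ) {x : ℝ} (hx : 0 < x) :
    HasDerivAt (polygammaSeq N k) (polygammaSeq N (k + 1) x) x := by
  cases k with
  | zero =>
    simpa [polygammaSeq] using
      ((hasDerivAt_sum_inv_add_pow (range (N + 1)) 1 hx).const_sub (log N))
  | succ k =>
    refine ((hasDerivAt_sum_inv_add_pow (range (N + 1)) (k + 2) hx).const_mul
      ((-1 : ℝ) ^ (k + 2) * (k + 1)!)).congr_deriv ?_
    simp only [polygammaSeq, Nat.factorial_succ (k + 1)]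
    push_cast
    ring

theorem tendsto_log_sub_sum_range_succ_inv :
    Tendsto (fun N : ℕ => log N - ∑ m ∈ range (N + 1), (m + 1 : ℝ)⁻¹) atTop
      (𝓝 (-eulerMascheroniConstant)) := by
  have h := tendsto_harmonic_sub_log.neg.sub tendsto_one_div_add_atTop_nhds_zero_nat
  rw [sub_zero] at h
  refine h.congr fun N => ?_
  simp only [harmonic, Finset.sum_range_succ]
  push_cast
  ring

theorem tendstoUniformlyOn_polygammaSeq_zero {a b : ℝ} (ha : 0 < a) :
    TendstoUniformlyOn (fun N => polygammaSeq N 0) (polygamma 0) atTop (Icc a b) := by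
  set c := min a 1
  have hc : 0 < c := lt_min ha one_pos
  have hbound : ∀ (m : ℕ), ∀ x ∈ Icc a b,
      ‖(m + 1 : ℝ)⁻¹ - (x + m)⁻¹‖ ≤ (b + 1) * ((c + m) ^ 2)⁻¹ := by
    intro m x ⟨hax, hxb⟩
    have hcx : c ≤ x := (min_le_left a 1).trans hax
    have hc1 : c ≤ 1 := min_le_right a 1
    have hx : 0 < x := ha.trans_le hax
    rw [inv_sub_inv (by positivity) (by positivity), Real.norm_eq_abs, abs_div,
      abs_of_pos (by positivity : (0 : ℝ) < (m + 1) * (x + m)), ← div_eq_mul_inv]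
    refine div_le_div₀ (by linarith) ?_ (by positivity) ?_
    · rw [abs_le]; constructor <;> linarith
    · rw [sq]; exact mul_le_mul (by linarith) (by linarith) (by positivity) (by positivity)
  have hseries := tendstoUniformlyOn_tsum_nat
    ((summable_inv_add_pow c one_lt_two).mul_left (b + 1)) hbound
  refine ((tendsto_log_sub_sum_range_succ_inv.tendstoUniformlyOn_const (Icc a b)).add
    (hseries.comp_tendsto (tendsto_add_atTop_nat 1))).congr ?_ |>.congr_right ?_
  · refine Eventually.of_forall fun N x _ => ?_
    simp only [Pi.add_apply, polygammaSeq, Finset.sum_sub_distrib]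
    ring
  · exact fun _ _ => rfl

theorem tendstoUniformlyOn_polygammaSeq_succ {a : ℝ} (ha : 0 < a) (k : ℕ) :
    TendstoUniformlyOn (fun N => polygammaSeq N (k + 1)) (polygamma (k + 1)) atTop (Ici a) := by
  have hbound : ∀ (m : ℕ), ∀ x ∈ Ici a, ‖((x + m) ^ (k + 2))⁻¹‖ ≤ ((a + m) ^ (k + 2))⁻¹ := by
    intro m x hx
    rw [Real.norm_eq_abs, abs_of_pos (by have := ha.trans_le hx; positivity)]
    gcongr
    exact hx
  have hseries := tendstoUniformlyOn_tsum_nat (summable_inv_add_pow a (by omega)) hbound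
  exact Real.uniformContinuous_const_mul.comp_tendstoUniformlyOn
    (hseries.comp_tendsto (tendsto_add_atTop_nat 1))

theorem tendstoLocallyUniformlyOn_polygammaSeq (k : ℕ) :
    TendstoLocallyUniformlyOn (fun N => polygammaSeq N k) (polygamma k) atTop (Ioi 0) := by
  refine tendstoLocallyUniformlyOn_Ioi_of_Icc fun a b ha => ?_
  cases k with
  | zero => exact tendstoUniformlyOn_polygammaSeq_zero ha
  | succ k => exact (tendstoUniformlyOn_polygammaSeq_succ ha k).mono Icc_subset_Ici_self

theorem hasDerivAt_log_Gamma {x : ℝ} (hx : 0 < x) :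
    HasDerivAt (fun y => log (Gamma y)) (polygamma 0 x) x :=
  hasDerivAt_of_tendstoLocallyUniformlyOn isOpen_Ioi (tendstoLocallyUniformlyOn_polygammaSeq 0)
    (Eventually.of_forall fun N _ hy => hasDerivAt_logGammaSeq N hy)
    (fun _ hy => BohrMollerup.tendsto_log_gamma hy) hx

theorem hasDerivAt_polygamma (k : ℕ) {x : ℝ} (hx : 0 < x) :
    HasDerivAt (polygamma k) (polygamma (k + 1) x) x :=
  hasDerivAt_of_tendstoLocallyUniformlyOn isOpen_Ioi
    (tendstoLocallyUniformlyOn_polygammaSeq (k + 1))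
    (Eventually.of_forall fun N _ hy => hasDerivAt_polygammaSeq N k hy)
    (fun _ hy => (tendstoLocallyUniformlyOn_polygammaSeq k).tendsto_at hy) hx

theorem iteratedDeriv_log_Gamma (k : ℕ) {x : ℝ} (hx : 0 < x) :
    iteratedDeriv (k + 1) (fun y => log (Gamma y)) x = polygamma k x :=
  iteratedDeriv_succ_eq_of_hasDerivAt isOpen_Ioi (fun _ => hasDerivAt_log_Gamma)
    (fun k _ => hasDerivAt_polygamma k) k hx

end LogGamma

theorem tsum_inv_quarter_add_pow_sub (k : ℕ) (hk : 1 < k) :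
    ∑' m : ℕ, ((1 / 4 + m : ℝ) ^ k)⁻¹ - ∑' m : ℕ, ((3 / 4 + m : ℝ) ^ k)⁻¹ =
      4 ^ k * ∑' j : ℕ, (-1 : ℝ) ^ j / (2 * j + 1) ^ k := by
  set f : ℕ → ℝ := fun j => (-1) ^ j / (2 * j + 1) ^ k
  have heven : HasSum (fun m => f (2 * m)) ((4 ^ k)⁻¹ * ∑' m : ℕ, ((1 / 4 + m : ℝ) ^ k)⁻¹) := by
    refine ((summable_inv_add_pow (1 / 4) hk).hasSum.mul_left (4 ^ k)⁻¹).congr_fun fun m => ?_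
    rw [← mul_inv, ← mul_pow]
    simp only [f, pow_mul, neg_one_sq, one_pow, one_div]
    push_cast
    ring_nf
  have hodd : HasSum (fun m => f (2 * m + 1))
      (-((4 ^ k)⁻¹ * ∑' m : ℕ, ((3 / 4 + m : ℝ) ^ k)⁻¹)) := by
    refine ((summable_inv_add_pow (3 / 4) hk).hasSum.mul_left (4 ^ k)⁻¹).neg.congr_fun fun m => ?_
    rw [← mul_inv, ← mul_pow]
    simp only [f, pow_succ, pow_mul]
    push_cast
    ring_nf
  rw [(heven.even_add_odd hodd).tsum_eq]
  field_simp
  ring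

theorem polygamma_quarter_diff_beta (n : ℕ) (hn : 1 ≤ n) :
    iteratedDeriv (2*n+1) (fun x : ℝ => Real.log (Real.Gamma x)) (1/4) -
      iteratedDeriv (2*n+1) (fun x : ℝ => Real.log (Real.Gamma x)) (3/4) =
      -(Nat.factorial (2*n) : ℝ) * 4^(2*n+1) * ∑' j : ℕ, (-1 : ℝ)^j / (2*j+1)^(2*n+1) := by
  obtain ⟨k, rfl⟩ : ∃ k, n = k + 1 := ⟨n - 1, by omega⟩
  rw [show 2 * (k + 1) = 2 * k + 1 + 1 by ring, LogGamma.iteratedDeriv_log_Gamma _ (by norm_num),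
    LogGamma.iteratedDeriv_log_Gamma _ (by norm_num)]
  simp only [LogGamma.polygamma]
  rw [← mul_sub, tsum_inv_quarter_add_pow_sub _ (by omega), Odd.neg_one_pow ⟨k + 1, by ring⟩]
  ring
end
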